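/- For every integer r ≥ 4, let k = ⌈r/e⌉ (where e is the base of the natural logarithm), and let L ⊆ {0, 1, …, r−k−1}. If H is an L-intersecting r-uniform hypergraph, then b(H) ≤ r!/r^r. -/

import Mathlib

open Finset

/-- A finite hypergraph: a finite vertex set (of naturals) together with a
finite set of edges, each edge being a subset of the vertex set. -/
structure Hypergraph' where
  verts : Finset ℕ
  edges : Finset (Finset ℕ)
  edge_sub : ∀ e ∈ edges, e ⊆ verts

namespace Hypergraph'

/-- `H` is `r`-uniform if every edge has exactly `r` vertices. -/
def IsUniform (r : ℕ) (H : Hypergraph') : Prop := ∀ e ∈ H.edges, e.card = r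

/-- `H` contains a copy of `F` (i.e. `F` is a subgraph of `H` after an injective
relabelling of the vertices of `F`). -/
def ContainsCopy (F H : Hypergraph') : Prop :=
  ∃ f : ℕ → ℕ, Set.InjOn f ↑F.verts ∧ (∀ v ∈ F.verts, f v ∈ H.verts) ∧
    ∀ e ∈ F.edges, e.image f ∈ H.edges

/-- `H` is `𝓕`-free: it contains no member of `𝓕` as a subgraph. -/
def Free (𝓕 : Set Hypergraph') (H : Hypergraph') : Prop := ∀ F ∈ 𝓕, ¬ F.ContainsCopy H

/-- `f` is a homomorphism from `F` to `H`: the image of every edge of `F` is an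
edge of `H`. -/
def IsHom (f : ℕ → ℕ) (F H : Hypergraph') : Prop :=
  (∀ v ∈ F.verts, f v ∈ H.verts) ∧ ∀ e ∈ F.edges, e.image f ∈ H.edges

/-- `H` is `𝓕`-hom-free: no member of `𝓕` admits a homomorphism to `H`. -/
def HomFree (𝓕 : Set Hypergraph') (H : Hypergraph') : Prop :=
  ∀ F ∈ 𝓕, ∀ f : ℕ → ℕ, ¬ IsHom f F H

/-- The degree of a vertex: the number of edges containing it. -/
def degree (H : Hypergraph') (v : ℕ) : ℕ := (H.edges.filter (fun e => v ∈ e)).card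

/-- `H` is `r`-partite: the vertices can be coloured with `r` colours so that every
edge contains exactly one vertex of each colour. -/
def Partite (r : ℕ) (H : Hypergraph') : Prop :=
  ∃ f : ℕ → Fin r, ∀ e ∈ H.edges, ∀ c : Fin r, (e.filter (fun v => f v = c)).card = 1

/-- `H` and `G` are isomorphic hypergraphs. -/
def Isomorphic (H G : Hypergraph') : Prop :=
  ∃ f : ℕ → ℕ, Set.BijOn f ↑H.verts ↑G.verts ∧ H.edges.image (Finset.image f) = G.edges

end Hypergraph'

/-- The Turán number `ex(n, 𝓕)`: the maximum number of edges in an `𝓕`-free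
`r`-uniform hypergraph on `n` vertices. -/
noncomputable def exNum (r n : ℕ) (𝓕 : Set Hypergraph') : ℕ :=
  sSup {m : ℕ | ∃ H : Hypergraph', H.verts = Finset.range n ∧ H.IsUniform r ∧
    H.Free 𝓕 ∧ H.edges.card = m}

/-- The Turán density `π(𝓕) = lim_{n → ∞} ex(n, 𝓕) / (n choose r)`. -/
noncomputable def turanDensity (r : ℕ) (𝓕 : Set Hypergraph') : ℝ :=
  Filter.lim (Filter.map (fun n : ℕ => (exNum r n 𝓕 : ℝ) / (n.choose r : ℝ)) Filter.atTop)

/-- The three edges of the `(r-i,i)`-tent on vertex set `{1, …, 2r-1}`. -/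
def tentEdges (r i : ℕ) : Finset (Finset ℕ) :=
  {Finset.Icc 1 r,
   Finset.Icc 1 i ∪ Finset.Icc (r + 1) (2 * r - i - 1) ∪ {2 * r - 1},
   Finset.Icc (i + 1) r ∪ Finset.Icc (2 * r - i) (2 * r - 1)}

/-- The `(r-i,i)`-tent `Δ_{(r-i,i)}`. -/
def tent (r i : ℕ) : Hypergraph' where
  verts := Finset.Icc 1 (2 * r - 1) ∪ (tentEdges r i).biUnion id
  edges := tentEdges r i
  edge_sub := fun e he =>
    (Finset.subset_biUnion_of_mem id he).trans Finset.subset_union_right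

/-- The family `𝓕_{r,k} = {Δ_{(r-i,i)} : 1 ≤ i ≤ k}`. -/
def tentFamily (r k : ℕ) : Set Hypergraph' := {H | ∃ i, 1 ≤ i ∧ i ≤ k ∧ H = tent r i}

/-- The Lagrangian of a hypergraph: the maximum of `∑_{e ∈ E} ∏_{v ∈ e} w v` over
nonnegative vertex weightings summing to `1`. -/
noncomputable def lagrangian (H : Hypergraph') : ℝ :=
  sSup {s : ℝ | ∃ w : ℕ → ℝ, (∀ v, 0 ≤ w v) ∧ (∑ v ∈ H.verts, w v) = 1 ∧
    s = ∑ e ∈ H.edges, ∏ v ∈ e, w v}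

/-- The blowup density `b(H) = r! · L(H)`. -/
noncomputable def blowupDensity (r : ℕ) (H : Hypergraph') : ℝ :=
  (r.factorial : ℝ) * lagrangian H

/-- Membership in the set `X_{r,k}`: `0 < x 1 ≤ x 2 ≤ ⋯ ≤ x r = 1`, and
`x i + x j ≤ x (i+j)` whenever `1 ≤ i ≤ k` and `i ≤ j ≤ r - i`. -/
def memX (r k : ℕ) (x : ℕ → ℝ) : Prop :=
  0 < x 1 ∧ (∀ i, 1 ≤ i → i < r → x i ≤ x (i + 1)) ∧ x r = 1 ∧
    ∀ i j, 1 ≤ i → i ≤ k → i ≤ j → i + j ≤ r → x i + x j ≤ x (i + j)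

/-- The interval `[L, R]` is uniform for `x`: `x i = x L + (i - L) * x 1` on it. -/
def UniformIntv (x : ℕ → ℝ) (L R : ℕ) : Prop :=
  ∀ i, L ≤ i → i ≤ R → x i = x L + ((i - L : ℕ) : ℝ) * x 1

/-- `[L, R]` is a segment: a uniform interval (inside `[0, r]`) that is not properly
contained in any other uniform interval. -/
def IsSegment (r : ℕ) (x : ℕ → ℝ) (L R : ℕ) : Prop :=
  L ≤ R ∧ R ≤ r ∧ UniformIntv x L R ∧
    ∀ L' R', L' ≤ L → R ≤ R' → R' ≤ r → UniformIntv x L' R' → L' = L ∧ R' = R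

/-- Shannon entropy (base 2) of a finitely supported distribution `p` on `s`. -/
noncomputable def ent {α : Type*} (s : Finset α) (p : α → ℝ) : ℝ :=
  ∑ a ∈ s, -(p a * Real.logb 2 (p a))

/-- Entropy of the pushforward of `p` along `g` (the entropy of `g(X)`). -/
noncomputable def pushEnt {α β : Type*} [DecidableEq β] (s : Finset α) (p : α → ℝ)
    (g : α → β) : ℝ :=
  ent (s.image g) (fun b => ∑ a ∈ s.filter (fun a => g a = b), p a)

/-- All tuples in `V(H)^r`. -/
def tupleSpace (r : ℕ) (H : Hypergraph') : Finset (Fin r → ℕ) :=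
  Fintype.piFinset fun _ : Fin r => H.verts

/-- The joint entropy `H(X_1, …, X_r)` of a random tuple with distribution `p`. -/
noncomputable def jointEnt (r : ℕ) (H : Hypergraph') (p : (Fin r → ℕ) → ℝ) : ℝ :=
  ent (tupleSpace r H) p

/-- The entropy `H(X_i, X_{i+1}, …, X_r)` of the suffix starting at position `i`
(1-indexed) of a random tuple with distribution `p`. -/
noncomputable def suffixEnt (r : ℕ) (H : Hypergraph') (p : (Fin r → ℕ) → ℝ) (i : ℕ) : ℝ :=
  pushEnt (tupleSpace r H) p (fun t (j : Fin r) => if i - 1 ≤ (j : ℕ) then t j else 0)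

/-- The entropy `H(X_{j+1})` of the single coordinate `j` (0-indexed). -/
noncomputable def coordEnt (r : ℕ) (H : Hypergraph') (p : (Fin r → ℕ) → ℝ) (j : Fin r) : ℝ :=
  pushEnt (tupleSpace r H) p (fun t => t j)

/-- `p` is the distribution of a random edge with uniform ordering on `H`:
nonnegative, total mass one, supported on tuples whose value set is an edge, and
exchangeable (invariant under permutations of the coordinates). -/
def IsRandomEdge (r : ℕ) (H : Hypergraph') (p : (Fin r → ℕ) → ℝ) : Prop :=
  (∀ t, 0 ≤ p t) ∧
  (∑ t ∈ tupleSpace r H, p t = 1) ∧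
  (∀ t, p t ≠ 0 → Finset.image t Finset.univ ∈ H.edges) ∧
  (∀ σ : Equiv.Perm (Fin r), ∀ t, p (t ∘ σ) = p t)

/-- Every pair of distinct vertices lies in a common edge. -/
def TwoCovered (H : Hypergraph') : Prop :=
  ∀ u ∈ H.verts, ∀ v ∈ H.verts, u ≠ v → ∃ e ∈ H.edges, u ∈ e ∧ v ∈ e

/-- `G` is a blowup of `G0`. -/
def IsBlowup (G0 G : Hypergraph') : Prop :=
  ∃ B : ℕ → Finset ℕ,
    (∀ v ∈ G0.verts, (B v).Nonempty) ∧
    (∀ u ∈ G0.verts, ∀ v ∈ G0.verts, u ≠ v → Disjoint (B u) (B v)) ∧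
    G.verts = G0.verts.biUnion B ∧
    ∀ e : Finset ℕ, e ∈ G.edges ↔
      ∃ e0 ∈ G0.edges, e ⊆ e0.biUnion B ∧ ∀ v ∈ e0, (e ∩ B v).card = 1

/-- `G` is symmetrised: a blowup of a 2-covered `r`-uniform hypergraph. -/
def Symmetrised (r : ℕ) (G : Hypergraph') : Prop :=
  ∃ G0 : Hypergraph', G0.IsUniform r ∧ TwoCovered G0 ∧ IsBlowup G0 G

/-- The family `𝓣_{r,k}` of `r`-uniform hypergraphs with exactly three edges
`A, B, C` such that `A ⊆ B ∪ C`, `(B ∩ C) \ A ≠ ∅` and `|A ∩ B| ≥ r - k`. -/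
def TFamily (r k : ℕ) : Set Hypergraph' :=
  {H | H.IsUniform r ∧ ∃ A B C : Finset ℕ,
    H.verts = A ∪ B ∪ C ∧ H.edges = {A, B, C} ∧
    A ≠ B ∧ A ≠ C ∧ B ≠ C ∧
    A ⊆ B ∪ C ∧ ((B ∩ C) \ A).Nonempty ∧ r - k ≤ (A ∩ B).card}

/-- `H` is `Lset`-intersecting: any two distinct edges intersect in a number of
vertices belonging to `Lset`. -/
def LIntersecting (Lset : Set ℕ) (H : Hypergraph') : Prop :=
  ∀ e ∈ H.edges, ∀ e' ∈ H.edges, e ≠ e' → (e ∩ e').card ∈ Lset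

/-- `H` is a `λ`-tent for the partition `lam = (λ_1, …, λ_m)` of `r`: it has
`m + 1` edges `e 0, e 1, …, e m`, each of size `r`, with `|e 0 ∩ e i| = λ_i`,
the sets `e 0 ∩ e 1, …, e 0 ∩ e m` partitioning `e 0`, and a vertex `v` with
`e i ∩ e j = {v}` for all `1 ≤ i < j ≤ m`. -/
def IsGeneralTent (r : ℕ) (lam : List ℕ) (H : Hypergraph') : Prop :=
  ∃ e : ℕ → Finset ℕ,
    H.verts = (Finset.range (lam.length + 1)).biUnion e ∧
    H.edges = (Finset.range (lam.length + 1)).image e ∧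
    H.edges.card = lam.length + 1 ∧
    (∀ i ∈ Finset.range (lam.length + 1), (e i).card = r) ∧
    (∀ i, 1 ≤ i → i ≤ lam.length → (e 0 ∩ e i).card = lam.getD (i - 1) 0) ∧
    e 0 = (Finset.Icc 1 lam.length).biUnion (fun i => e 0 ∩ e i) ∧
    (∀ i j, 1 ≤ i → i < j → j ≤ lam.length → Disjoint (e 0 ∩ e i) (e 0 ∩ e j)) ∧
    (∃ v : ℕ, ∀ i j, 1 ≤ i → i < j → j ≤ lam.length → e i ∩ e j = {v})

/-- The balanced complete `r`-partite `r`-uniform hypergraph `T^r(n)` on the vertex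
set `{0, …, n-1}`, with parts given by residues modulo `r`: the edges are exactly
the `r`-subsets whose vertices have pairwise distinct residues mod `r`, i.e. those
meeting each part in exactly one vertex. -/
def turanGraph (r n : ℕ) : Hypergraph' where
  verts := Finset.range n
  edges := (Finset.powersetCard r (Finset.range n)).filter
    (fun e => ∀ u ∈ e, ∀ v ∈ e, u ≠ v → u % r ≠ v % r)
  edge_sub := by
    intro e he
    simp only [Finset.mem_filter, Finset.mem_powersetCard] at he
    exact he.1.1

/-!
Given a weighting `w`, let `q e ∝ ∏_{v ∈ e} w v` be the induced distribution on edges, pick a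
`q`-random edge and then a uniformly random ordered `s`-tuple of distinct vertices in it, where
`s = r - k`. Distinct edges share fewer than `s` vertices, so the tuple determines the edge and its
entropy is `H(q) + log (r.descFactorial s)`. Gibbs' inequality against drawing `s` vertices one by
one without replacement proportionally to `w`, together with Jensen's inequality for
`a = -E[log w(X)]`, `X` a uniform vertex of the random edge (so that
`exp (-a) ≤ E[w(X)] ≤ 1/r`), gives
`log ∑_e ∏_{v ∈ e} w v ≤ -k a + ∑_{j<s} log (1 - j e^{-a}) - log (r.descFactorial s)`.
On `a ≥ log r` the right-hand side is largest at `a = log r`, where it equals `-r log r`, because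
`∑_{j<s} r / (r - j) ≤ r log (r / k) ≤ r` when `r ≤ e k`.
-/

open Real

lemma sum_mul_log_le_log_sum_mul {ι : Type*} {S : Finset ι} {ρ x : ι → ℝ}
    (hρ : ∀ i ∈ S, 0 ≤ ρ i) (hρ1 : ∑ i ∈ S, ρ i = 1) (hx : ∀ i ∈ S, 0 < x i) :
    ∑ i ∈ S, ρ i * log (x i) ≤ log (∑ i ∈ S, ρ i * x i) := by
  simpa only [smul_eq_mul] using strictConcaveOn_log_Ioi.concaveOn.le_map_sum hρ hρ1 hx

lemma exp_sum_mul_le_sum_mul_exp {ι : Type*} {S : Finset ι} {ρ x : ι → ℝ}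
    (hρ : ∀ i ∈ S, 0 ≤ ρ i) (hρ1 : ∑ i ∈ S, ρ i = 1) :
    exp (∑ i ∈ S, ρ i * x i) ≤ ∑ i ∈ S, ρ i * exp (x i) := by
  simpa only [smul_eq_mul] using
    convexOn_exp.map_sum_le hρ hρ1 (fun i _ => Set.mem_univ (x i))

lemma sum_mul_log_le_sum_mul_log_self {ι : Type*} {S : Finset ι} {ρ μ : ι → ℝ}
    (hρ : ∀ i ∈ S, 0 < ρ i) (hρ1 : ∑ i ∈ S, ρ i = 1) (hμ : ∀ i ∈ S, 0 < μ i)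
    (hμ1 : ∑ i ∈ S, μ i ≤ 1) :
    ∑ i ∈ S, ρ i * log (μ i) ≤ ∑ i ∈ S, ρ i * log (ρ i) := by
  have hjensen := sum_mul_log_le_log_sum_mul (x := fun i => μ i / ρ i)
    (fun i hi => (hρ i hi).le) hρ1 (fun i hi => div_pos (hμ i hi) (hρ i hi))
  have hcancel : ∑ i ∈ S, ρ i * (μ i / ρ i) = ∑ i ∈ S, μ i :=
    sum_congr rfl fun i hi => mul_div_cancel₀ _ (hρ i hi).ne'
  have hsplit : ∑ i ∈ S, ρ i * log (μ i / ρ i)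
      = ∑ i ∈ S, ρ i * log (μ i) - ∑ i ∈ S, ρ i * log (ρ i) := by
    rw [← sum_sub_distrib]
    refine sum_congr rfl fun i hi => ?_
    rw [log_div (hμ i hi).ne' (hρ i hi).ne', mul_sub]
  have hμpos : 0 < ∑ i ∈ S, μ i :=
    sum_pos hμ (nonempty_of_sum_ne_zero (hρ1 ▸ one_ne_zero))
  have := log_nonpos hμpos.le hμ1
  rw [hcancel, hsplit] at hjensen
  linarith

lemma sum_range_inv_sub_le_log {r : ℝ} {s : ℕ} (hs : (s : ℝ) < r) :
    ∑ j ∈ range s, 1 / (r - j) ≤ log r - log (r - s) := by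
  have hterm : ∀ j ∈ range s, 1 / (r - j) ≤ log (r - j) - log (r - (j + 1 : ℕ)) := by
    intro j hj
    have hj : (j : ℝ) + 1 ≤ s := by exact_mod_cast mem_range.mp hj
    have h1 : 0 < r - (j + 1 : ℕ) := by push_cast; linarith
    have h2 : 0 < r - j := by linarith
    have := log_le_sub_one_of_pos (div_pos h1 h2)
    rw [log_div h1.ne' h2.ne'] at this
    have h3 : (r - (j + 1 : ℕ)) / (r - j) - 1 = -(1 / (r - j)) := by
      field_simp; push_cast; ring
    linarith
  calc ∑ j ∈ range s, 1 / (r - j)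
      ≤ ∑ j ∈ range s, (log (r - j) - log (r - (j + 1 : ℕ))) := sum_le_sum hterm
    _ = log r - log (r - s) := by
      rw [sum_range_sub' (fun j : ℕ => log (r - j)) s]; simp

lemma log_sub_le_log_sub_add {N r j : ℝ} (hj : 0 ≤ j) (hjr : j < r) (hrN : r ≤ N) :
    log (N - j) ≤ log (r - j) + r / (r - j) * (log N - log r) := by
  have hrj : 0 < r - j := by linarith
  have hr : 0 < r := by linarith
  have hN : 0 < N := by linarith
  have hbern := one_add_mul_self_le_rpow_one_add (s := N / r - 1) (p := r / (r - j))
    (by have := div_nonneg hN.le hr.le; linarith) (by rw [le_div_iff₀ hrj]; linarith)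
  have hlhs : 1 + r / (r - j) * (N / r - 1) = (N - j) / (r - j) := by
    field_simp; ring
  rw [hlhs, add_sub_cancel, ← log_le_log_iff (div_pos (by linarith) hrj) (by positivity),
    log_rpow (by positivity), log_div (by linarith) hrj.ne', log_div hN.ne' hr.ne'] at hbern
  linarith

lemma sum_range_div_sub_le_self {r : ℝ} {k s : ℕ} (hrks : r = k + s) (hk : (0 : ℝ) < k)
    (hek : r ≤ exp 1 * k) : ∑ j ∈ range s, r / (r - j) ≤ r := by
  have hr : 0 < r := by rw [hrks]; positivity
  have hlogk : log r - log k ≤ 1 := by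
    have := log_le_log hr hek
    rw [log_mul (exp_pos 1).ne' hk.ne', log_exp] at this
    linarith
  have hsum := sum_range_inv_sub_le_log (r := r) (s := s) (by rw [hrks]; linarith)
  rw [show r - s = k by rw [hrks]; ring] at hsum
  calc ∑ j ∈ range s, r / (r - j) = r * ∑ j ∈ range s, 1 / (r - j) := by
        rw [mul_sum]; simp_rw [mul_one_div]
    _ ≤ r * 1 := by gcongr; linarith
    _ = r := mul_one r

lemma neg_mul_add_sum_log_one_sub_le {r a : ℝ} {k s : ℕ} (hrks : r = k + s)
    (hek : r ≤ exp 1 * k) (ha : log r ≤ a) :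
    -(k * a) + ∑ j ∈ range s, log (1 - j * exp (-a))
      ≤ -(r * log r) + ∑ j ∈ range s, log (r - j) := by
  rcases Nat.eq_zero_or_pos k with rfl | hk
  · obtain rfl : s = 0 := by
      have : (s : ℝ) ≤ 0 := by simpa [hrks] using hek
      exact_mod_cast this.antisymm (Nat.cast_nonneg s)
    simp [hrks]
  replace hk : (0 : ℝ) < k := Nat.cast_pos.mpr hk
  have hr : 0 < r := by rw [hrks]; positivity
  have hrN : r ≤ exp a := by rwa [← exp_le_exp, exp_log hr] at ha
  have hjr : ∀ j ∈ range s, (j : ℝ) < r := fun j hj => by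
    rw [hrks]; linarith [show (j : ℝ) < s by exact_mod_cast mem_range.mp hj]
  have hlog_one_sub : ∀ j ∈ range s, log (1 - j * exp (-a)) = log (exp a - j) - a := by
    intro j hj
    have hNj : 0 < exp a - j := by linarith [hjr j hj]
    rw [exp_neg, ← div_eq_mul_inv, one_sub_div (exp_pos a).ne', log_div hNj.ne' (exp_pos a).ne',
      log_exp]
  have hharmonic := sum_range_div_sub_le_self hrks hk hek
  have hbernoulli : ∑ j ∈ range s, log (exp a - j)
      ≤ ∑ j ∈ range s, log (r - j) + r * (a - log r) := by
    calc ∑ j ∈ range s, log (exp a - j)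
        ≤ ∑ j ∈ range s, (log (r - j) + r / (r - j) * (a - log r)) := by
          refine sum_le_sum fun j hj => ?_
          simpa only [log_exp] using log_sub_le_log_sub_add (Nat.cast_nonneg j) (hjr j hj) hrN
      _ ≤ ∑ j ∈ range s, log (r - j) + r * (a - log r) := by
          rw [sum_add_distrib, ← sum_mul]
          gcongr
  rw [sum_congr rfl hlog_one_sub, sum_sub_distrib, sum_const,
    card_range, nsmul_eq_mul]
  rw [hrks] at hbernoulli ⊢
  linarith

lemma log_descFactorial {n k : ℕ} (hkn : k ≤ n) :
    log (n.descFactorial k) = ∑ j ∈ range k, log ((n : ℝ) - j) := by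
  have hprod : ((n.descFactorial k : ℕ) : ℝ) = ∏ j ∈ range k, ((n : ℝ) - j) := by
    rw [Nat.descFactorial_eq_prod_range, Nat.cast_prod]
    exact prod_congr rfl fun j hj => Nat.cast_sub (by linarith [mem_range.mp hj])
  rw [hprod, log_prod fun j hj => ?_]
  have : (j : ℝ) < n := by exact_mod_cast (mem_range.mp hj).trans_le hkn
  linarith

def injTuples (n : ℕ) (F : Finset ℕ) : Finset (Fin n → ℕ) :=
  {y ∈ Fintype.piFinset fun _ => F | Function.Injective y}

lemma mem_injTuples {n : ℕ} {F : Finset ℕ} {y : Fin n → ℕ} :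
    y ∈ injTuples n F ↔ (∀ t, y t ∈ F) ∧ Function.Injective y := by
  simp [injTuples]

lemma sum_injTuples_succ {M : Type*} [AddCommMonoid M] (n : ℕ) (F : Finset ℕ)
    (G : (Fin (n + 1) → ℕ) → M) :
    ∑ y ∈ injTuples (n + 1) F, G y
      = ∑ z ∈ injTuples n F, ∑ a ∈ F \ image z univ, G (Fin.snoc z a) := by
  rw [sum_sigma']
  refine sum_bij' (fun y _ => ⟨Fin.init y, y (Fin.last n)⟩)
    (fun x _ => Fin.snoc x.1 x.2) ?_ ?_ ?_ ?_ ?_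
  · intro y hy
    simp only [mem_injTuples] at hy
    simp only [mem_sigma, mem_injTuples, mem_sdiff, mem_image, mem_univ, true_and, not_exists]
    refine ⟨⟨fun t => hy.1 _, hy.2.comp (Fin.castSucc_injective n)⟩, hy.1 _, fun t h => ?_⟩
    exact (Fin.castSucc_lt_last t).ne (hy.2 h)
  · rintro ⟨z, a⟩ hx
    simp only [mem_sigma, mem_injTuples, mem_sdiff] at hx
    refine mem_injTuples.mpr
      ⟨fun t => ?_, Fin.snoc_injective_of_injective hx.1.2 (by simpa using hx.2.2)⟩
    induction t using Fin.lastCases <;> simp [hx.1.1, hx.2.1]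
  · intro y _; simp
  · rintro ⟨z, a⟩ _; simp
  · intro y _; simp

lemma card_injTuples (n : ℕ) (F : Finset ℕ) : #(injTuples n F) = (#F).descFactorial n := by
  induction n with
  | zero => rfl
  | succ n ih =>
    have hfree : ∀ z ∈ injTuples n F, #(F \ image z univ) = #F - n := by
      intro z hz
      rw [mem_injTuples] at hz
      rw [card_sdiff_of_subset (image_subset_iff.mpr fun t _ => hz.1 t),
        card_image_of_injective _ hz.2, card_univ, Fintype.card_fin]
    rw [card_eq_sum_ones, sum_injTuples_succ]
    simp only [← card_eq_sum_ones]
    rw [sum_congr rfl hfree, sum_const, ih, smul_eq_mul, Nat.descFactorial_succ, mul_comm]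

lemma card_smul_sum_injTuples_apply {M : Type*} [AddCommMonoid M] (n : ℕ) (F : Finset ℕ)
    (t : Fin n) (φ : ℕ → M) :
    #F • ∑ y ∈ injTuples n F, φ (y t) = #(injTuples n F) • ∑ v ∈ F, φ v := by
  set T := injTuples n F
  have hmaps : ∀ y ∈ T, y t ∈ F := fun y hy => (mem_injTuples.mp hy).1 t
  have hswap : ∀ {u u'}, u ∈ F → u' ∈ F → ∀ y ∈ {y ∈ T | y t = u},
      Equiv.swap u u' ∘ y ∈ {y ∈ T | y t = u'} := by
    intro u u' hu hu' y hy
    simp only [T, mem_filter, mem_injTuples] at hy ⊢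
    refine ⟨⟨fun i => ?_, (Equiv.injective _).comp hy.1.2⟩, by simp [hy.2]⟩
    rw [Function.comp_apply, Equiv.swap_apply_def]
    split_ifs
    exacts [hu', hu, hy.1.1 i]
  have hfiber : ∀ v ∈ F, ∀ v' ∈ F, #{y ∈ T | y t = v} = #{y ∈ T | y t = v'} := by
    intro v hv v' hv'
    refine card_nbij' (Equiv.swap v v' ∘ ·) (Equiv.swap v v' ∘ ·)
      (fun y hy => hswap hv hv' y hy)
      (fun y hy => by rw [Equiv.swap_comm]; exact hswap hv' hv y hy) ?_ ?_ <;>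
      intro y _ <;> ext i <;> simp
  calc #F • ∑ y ∈ T, φ (y t)
      = #F • ∑ v ∈ F, #{y ∈ T | y t = v} • φ v := by
        rw [← sum_fiberwise_of_maps_to hmaps]
        congr 1
        refine sum_congr rfl fun v _ => ?_
        rw [← sum_const]
        exact sum_congr rfl fun y hy => by rw [(mem_filter.mp hy).2]
    _ = ∑ v' ∈ F, ∑ v ∈ F, #{y ∈ T | y t = v'} • φ v := by
        rw [← sum_const]
        exact sum_congr rfl fun v' hv' => sum_congr rfl fun v hv => by rw [hfiber v hv v' hv']
    _ = #T • ∑ v ∈ F, φ v := by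
        rw [card_eq_sum_card_fiberwise hmaps, sum_smul]
        simp_rw [smul_sum]

lemma sum_apply_le_sum_of_injective {n : ℕ} {F : Finset ℕ} {y : Fin n → ℕ} {w : ℕ → ℝ}
    (hy : y ∈ injTuples n F) (hw : ∀ v ∈ F, 0 ≤ w v) (T : Finset (Fin n)) :
    ∑ t ∈ T, w (y t) ≤ ∑ v ∈ F, w v := by
  rw [mem_injTuples] at hy
  rw [← sum_image fun i _ j _ h => hy.2 h]
  exact sum_le_sum_of_subset_of_nonneg (image_subset_iff.mpr fun t _ => hy.1 t)
    fun v hv _ => hw v hv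

lemma sum_Iio_apply_add_le {n : ℕ} {F : Finset ℕ} {y : Fin n → ℕ} {w : ℕ → ℝ}
    (hy : y ∈ injTuples n F) (hw : ∀ v ∈ F, 0 ≤ w v) (t : Fin n) :
    ∑ t' ∈ Iio t, w (y t') + w (y t) ≤ ∑ v ∈ F, w v := by
  have := sum_apply_le_sum_of_injective hy hw (Iic t)
  rwa [← Iio_insert, sum_insert (by simp), add_comm] at this

/-- The probability that drawing `n` elements one at a time without replacement, each time with
probability proportional to `w` among those not drawn yet, produces the sequence `y`
(the weights being normalised to total `1`). -/
noncomputable def sampleProb (w : ℕ → ℝ) {n : ℕ} (y : Fin n → ℕ) : ℝ :=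
  ∏ t, w (y t) / (1 - ∑ t' ∈ Iio t, w (y t'))

lemma sampleProb_snoc (w : ℕ → ℝ) {n : ℕ} (z : Fin n → ℕ) (a : ℕ) :
    sampleProb w (Fin.snoc z a : Fin (n + 1) → ℕ)
      = sampleProb w z * (w a / (1 - ∑ t, w (z t))) := by
  simp only [sampleProb, Fin.prod_univ_castSucc, Fin.snoc_castSucc, Fin.snoc_last,
    Fin.sum_Iio_castSucc, Fin.Iio_last_eq_map, sum_map, Fin.coe_castSuccEmb]

lemma sampleProb_nonneg {V : Finset ℕ} {w : ℕ → ℝ} (hw : ∀ v ∈ V, 0 ≤ w v)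
    (hV : ∑ v ∈ V, w v ≤ 1) {n : ℕ} {y : Fin n → ℕ} (hy : y ∈ injTuples n V) :
    0 ≤ sampleProb w y := by
  refine prod_nonneg fun t _ => div_nonneg (hw _ ((mem_injTuples.mp hy).1 t)) ?_
  linarith [sum_Iio_apply_add_le hy hw t, hw _ ((mem_injTuples.mp hy).1 t)]

lemma sum_sampleProb_le_one {V : Finset ℕ} {w : ℕ → ℝ} (hw : ∀ v ∈ V, 0 ≤ w v)
    (hV : ∑ v ∈ V, w v ≤ 1) (n : ℕ) : ∑ y ∈ injTuples n V, sampleProb w y ≤ 1 := by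
  induction n with
  | zero => simp [sampleProb, card_injTuples]
  | succ n ih =>
    refine le_trans ?_ ih
    rw [sum_injTuples_succ]
    refine sum_le_sum fun z hz => ?_
    have hzV := mem_injTuples.mp hz
    have hrest : ∑ a ∈ V \ image z univ, w a ≤ 1 - ∑ t, w (z t) := by
      rw [sum_sdiff_eq_sub (image_subset_iff.mpr fun t _ => hzV.1 t),
        sum_image fun i _ j _ h => hzV.2 h]
      linarith
    simp only [sampleProb_snoc, ← mul_sum, ← sum_div]
    refine mul_le_of_le_one_right (sampleProb_nonneg hw hV hz) (div_le_one_of_le₀ hrest ?_)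
    linarith [sum_apply_le_sum_of_injective hz hw univ]

lemma log_sampleProb {e : Finset ℕ} {w : ℕ → ℝ} (hw : ∀ v ∈ e, 0 < w v)
    (he : ∑ v ∈ e, w v ≤ 1) {n : ℕ} {y : Fin n → ℕ} (hy : y ∈ injTuples n e) :
    0 < sampleProb w y ∧ log (sampleProb w y)
      = ∑ t, (log (w (y t)) - log (1 - ∑ t' ∈ Iio t, w (y t'))) := by
  have hwy : ∀ t, 0 < w (y t) := fun t => hw _ ((mem_injTuples.mp hy).1 t)
  have hden : ∀ t, 0 < 1 - ∑ t' ∈ Iio t, w (y t') := fun t => by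
    linarith [sum_Iio_apply_add_le hy (fun v hv => (hw v hv).le) t, hwy t]
  refine ⟨prod_pos fun t _ => div_pos (hwy t) (hden t), ?_⟩
  rw [sampleProb, log_prod fun t _ => (div_pos (hwy t) (hden t)).ne']
  exact sum_congr rfl fun t _ => log_div (hwy t).ne' (hden t).ne'

section EdgeTuples

variable {E : Finset (Finset ℕ)} {r s : ℕ}

lemma sum_sigma_injTuples_fst (hE : ∀ e ∈ E, #e = r) (g : Finset ℕ → ℝ) :
    ∑ x ∈ E.sigma (injTuples s), g x.1 = r.descFactorial s * ∑ e ∈ E, g e := by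
  rw [sum_sigma, mul_sum]
  refine sum_congr rfl fun e he => ?_
  dsimp only
  rw [sum_const, card_injTuples, hE e he, nsmul_eq_mul]

lemma sum_sigma_injTuples_apply (hE : ∀ e ∈ E, #e = r) (hsr : s ≤ r) (q : Finset ℕ → ℝ)
    (t : Fin s) (φ : ℕ → ℝ) :
    ∑ x ∈ E.sigma (injTuples s), q x.1 / r.descFactorial s * φ (x.2 t)
      = (∑ e ∈ E, q e * ∑ v ∈ e, φ v) / r := by
  have hD : (r.descFactorial s : ℝ) ≠ 0 := by
    exact_mod_cast (Nat.descFactorial_pos.mpr hsr).ne'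
  have hr : (r : ℝ) ≠ 0 := by exact_mod_cast (t.pos.trans_le hsr).ne'
  rw [sum_sigma, sum_div]
  refine sum_congr rfl fun e he => ?_
  have hunif := card_smul_sum_injTuples_apply s e t φ
  rw [nsmul_eq_mul, nsmul_eq_mul, card_injTuples, hE e he] at hunif
  dsimp only
  rw [← mul_sum]
  field_simp
  linear_combination q e * hunif

lemma injOn_snd_sigma_injTuples
    (hint : (E : Set (Finset ℕ)).Pairwise fun e e' => #(e ∩ e') < s) :
    Set.InjOn Sigma.snd (E.sigma (injTuples s) : Set (Σ _ : Finset ℕ, Fin s → ℕ)) := by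
  rintro ⟨e, y⟩ hx ⟨e', y'⟩ hx' (rfl : y = y')
  simp only [coe_sigma, Set.mem_sigma_iff, mem_coe, mem_injTuples] at hx hx'
  obtain rfl : e = e' := by
    by_contra hne
    have hsub : image y univ ⊆ e ∩ e' :=
      image_subset_iff.mpr fun t _ => mem_inter.mpr ⟨hx.2.1 t, hx'.2.1 t⟩
    have := card_le_card hsub
    rw [card_image_of_injective _ hx.2.2, card_univ, Fintype.card_fin] at this
    exact (hint hx.1 hx'.1 hne).not_ge this
  rfl

lemma sum_sigma_injTuples_div_descFactorial (hE : ∀ e ∈ E, #e = r) (hsr : s ≤ r)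
    (q : Finset ℕ → ℝ) :
    ∑ x ∈ E.sigma (injTuples s), q x.1 / r.descFactorial s = ∑ e ∈ E, q e := by
  rw [sum_sigma_injTuples_fst hE fun e => q e / r.descFactorial s, ← sum_div,
    mul_div_cancel₀ _ (Nat.cast_ne_zero.mpr (Nat.descFactorial_pos.mpr hsr).ne')]

lemma sum_sigma_injTuples_sampleProb_le_one {V : Finset ℕ} {w : ℕ → ℝ}
    (hint : (E : Set (Finset ℕ)).Pairwise fun e e' => #(e ∩ e') < s) (heV : ∀ e ∈ E, e ⊆ V)
    (hwV : ∀ v ∈ V, 0 ≤ w v) (hV : ∑ v ∈ V, w v ≤ 1) :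
    ∑ x ∈ E.sigma (injTuples s), sampleProb w x.2 ≤ 1 := by
  rw [← sum_image (injOn_snd_sigma_injTuples hint)]
  refine le_trans (sum_le_sum_of_subset_of_nonneg ?_ fun y hy _ => sampleProb_nonneg hwV hV hy)
    (sum_sampleProb_le_one hwV hV s)
  intro y hy
  obtain ⟨x, hx, rfl⟩ := mem_image.mp hy
  rw [mem_sigma, mem_injTuples] at hx
  exact mem_injTuples.mpr ⟨fun t => heV _ hx.1 (hx.2.1 t), hx.2.2⟩

end EdgeTuples

section EdgeDistribution

variable {E : Finset (Finset ℕ)} {q : Finset ℕ → ℝ} {w : ℕ → ℝ} {r s : ℕ}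

lemma exp_sum_mul_sum_log_div_le (hr : 0 < r) (hE : ∀ e ∈ E, #e = r)
    (hq : ∀ e ∈ E, 0 ≤ q e) (hq1 : ∑ e ∈ E, q e = 1)
    (hw : ∀ e ∈ E, ∀ v ∈ e, 0 < w v) :
    exp ((∑ e ∈ E, q e * ∑ v ∈ e, log (w v)) / r)
      ≤ (∑ e ∈ E, q e * ∑ v ∈ e, w v) / r := by
  have hr' : (r : ℝ) ≠ 0 := Nat.cast_ne_zero.mpr hr.ne'
  have hsigma : ∀ φ : ℕ → ℝ,
      ∑ x ∈ E.sigma id, q x.1 / r * φ x.2 = (∑ e ∈ E, q e * ∑ v ∈ e, φ v) / r := by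
    intro φ
    rw [sum_sigma, sum_div]
    refine sum_congr rfl fun e _ => ?_
    simp only [id, ← mul_sum, mul_div_right_comm]
  have hmass : ∑ x ∈ E.sigma id, q x.1 / r = 1 := by
    have := hsigma fun _ => 1
    simp only [mul_one, sum_const, nsmul_eq_mul] at this
    rw [this, sum_congr rfl fun e he => by rw [hE e he], ← sum_mul, hq1, one_mul, div_self hr']
  have hjensen := exp_sum_mul_le_sum_mul_exp (S := E.sigma id) (ρ := fun x => q x.1 / r)
    (x := fun x => log (w x.2))
    (fun x hx => div_nonneg (hq x.1 (mem_sigma.mp hx).1) (Nat.cast_nonneg r)) hmass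
  have hlog := hsigma fun v => log (w v)
  have hlin := hsigma w
  have hexp : ∑ x ∈ E.sigma id, q x.1 / r * exp (log (w x.2))
      = ∑ x ∈ E.sigma id, q x.1 / r * w x.2 := sum_congr rfl fun x hx => by
    rw [mem_sigma] at hx
    rw [exp_log (hw x.1 hx.1 x.2 hx.2)]
  rwa [hlog, hexp, hlin] at hjensen

lemma log_le_of_sum_mul_sum_log_eq (hr : 0 < r) (hE : ∀ e ∈ E, #e = r)
    (hq : ∀ e ∈ E, 0 ≤ q e) (hq1 : ∑ e ∈ E, q e = 1) (hw : ∀ e ∈ E, ∀ v ∈ e, 0 < w v)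
    (he1 : ∀ e ∈ E, ∑ v ∈ e, w v ≤ 1) {a : ℝ}
    (ha : ∑ e ∈ E, q e * ∑ v ∈ e, log (w v) = -(r * a)) : log r ≤ a := by
  have hr' : (0 : ℝ) < r := Nat.cast_pos.mpr hr
  have hamgm := exp_sum_mul_sum_log_div_le hr hE hq hq1 hw
  have hmean : ∑ e ∈ E, q e * ∑ v ∈ e, w v ≤ 1 :=
    (sum_le_sum fun e he => mul_le_of_le_one_right (hq e he) (he1 e he)).trans hq1.le
  rw [ha, neg_div, mul_div_cancel_left₀ a hr'.ne'] at hamgm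
  have : exp (-a) ≤ exp (-log r) := by
    rw [exp_neg (log r), exp_log hr', ← one_div]
    exact hamgm.trans (div_le_div_of_nonneg_right hmean hr'.le)
  linarith [exp_le_exp.mp this]

lemma sum_mul_log_one_sub_sum_Iio_le (hsr : s ≤ r) (hE : ∀ e ∈ E, #e = r)
    (hq : ∀ e ∈ E, 0 < q e) (hq1 : ∑ e ∈ E, q e = 1) (hw : ∀ e ∈ E, ∀ v ∈ e, 0 < w v)
    (he1 : ∀ e ∈ E, ∑ v ∈ e, w v ≤ 1) {a : ℝ}
    (ha : ∑ e ∈ E, q e * ∑ v ∈ e, log (w v) = -(r * a)) (t : Fin s) :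
    ∑ x ∈ E.sigma (injTuples s),
        q x.1 / r.descFactorial s * log (1 - ∑ t' ∈ Iio t, w (x.2 t'))
      ≤ log (1 - t * exp (-a)) := by
  have hr : 0 < r := t.pos.trans_le hsr
  set D : ℝ := ((r.descFactorial s : ℕ) : ℝ)
  set S := E.sigma (injTuples s)
  have hρ : ∀ x ∈ S, 0 < q x.1 / D := fun x hx =>
    div_pos (hq _ (mem_sigma.mp hx).1) (Nat.cast_pos.mpr (Nat.descFactorial_pos.mpr hsr))
  have hρ1 : ∑ x ∈ S, q x.1 / D = 1 := (sum_sigma_injTuples_div_descFactorial hE hsr q).trans hq1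
  have hpos : ∀ x ∈ S, 0 < 1 - ∑ t' ∈ Iio t, w (x.2 t') := by
    intro x hx
    rw [mem_sigma] at hx
    linarith [sum_Iio_apply_add_le hx.2 (fun v hv => (hw _ hx.1 v hv).le) t, he1 _ hx.1,
      hw _ hx.1 _ ((mem_injTuples.mp hx.2).1 t)]
  set β := (∑ e ∈ E, q e * ∑ v ∈ e, w v) / r
  have hmean : ∑ x ∈ S, q x.1 / D * (1 - ∑ t' ∈ Iio t, w (x.2 t')) = 1 - t * β := by
    simp only [mul_sub, mul_one, sum_sub_distrib, hρ1, mul_sum]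
    rw [sum_comm, sum_congr rfl fun t' _ => sum_sigma_injTuples_apply hE hsr q t' w, sum_const,
      Fin.card_Iio, nsmul_eq_mul]
  have hβ : exp (-a) ≤ β := by
    have := exp_sum_mul_sum_log_div_le hr hE (fun e he => (hq e he).le) hq1 hw
    rwa [ha, neg_div, mul_div_cancel_left₀ a (Nat.cast_pos.mpr hr).ne'] at this
  have hmean_pos : 0 < 1 - t * β := by
    rw [← hmean]
    exact sum_pos (fun x hx => mul_pos (hρ x hx) (hpos x hx))
      (nonempty_of_sum_ne_zero (hρ1 ▸ one_ne_zero))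
  calc ∑ x ∈ S, q x.1 / D * log (1 - ∑ t' ∈ Iio t, w (x.2 t'))
      ≤ log (1 - t * β) :=
        hmean ▸ sum_mul_log_le_log_sum_mul (fun x hx => (hρ x hx).le) hρ1 hpos
    _ ≤ log (1 - t * exp (-a)) :=
      log_le_log hmean_pos (by nlinarith [(t : ℕ).cast_nonneg (α := ℝ)])

/-- `-∑ q log q + log (r.descFactorial s)` is the entropy of a uniformly random injective
`s`-tuple from a `q`-random edge; Gibbs' inequality against `sampleProb w` bounds it. -/
lemma tuple_entropy_le {V : Finset ℕ} (hsr : s ≤ r) (hE : ∀ e ∈ E, #e = r)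
    (hint : (E : Set (Finset ℕ)).Pairwise fun e e' => #(e ∩ e') < s) (heV : ∀ e ∈ E, e ⊆ V)
    (hwV : ∀ v ∈ V, 0 ≤ w v) (hV : ∑ v ∈ V, w v ≤ 1) (hw : ∀ e ∈ E, ∀ v ∈ e, 0 < w v)
    (hq : ∀ e ∈ E, 0 < q e) (hq1 : ∑ e ∈ E, q e = 1) {a : ℝ}
    (ha : ∑ e ∈ E, q e * ∑ v ∈ e, log (w v) = -(r * a)) :
    -(s * a) - ∑ j ∈ range s, log (1 - j * exp (-a))
      ≤ ∑ e ∈ E, q e * log (q e) - log (r.descFactorial s) := by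
  set D : ℝ := ((r.descFactorial s : ℕ) : ℝ)
  set S := E.sigma (injTuples s)
  have hD : 0 < D := Nat.cast_pos.mpr (Nat.descFactorial_pos.mpr hsr)
  have hρ : ∀ x ∈ S, 0 < q x.1 / D := fun x hx => div_pos (hq _ (mem_sigma.mp hx).1) hD
  have hρ1 : ∑ x ∈ S, q x.1 / D = 1 := (sum_sigma_injTuples_div_descFactorial hE hsr q).trans hq1
  have he1 : ∀ e ∈ E, ∑ v ∈ e, w v ≤ 1 := fun e he =>
    (sum_le_sum_of_subset_of_nonneg (heV e he) fun v hv _ => hwV v hv).trans hV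
  have hsample : ∀ x ∈ S, 0 < sampleProb w x.2 ∧ log (sampleProb w x.2)
      = ∑ t, (log (w (x.2 t)) - log (1 - ∑ t' ∈ Iio t, w (x.2 t'))) := fun x hx =>
    log_sampleProb (hw _ (mem_sigma.mp hx).1) (he1 _ (mem_sigma.mp hx).1) (mem_sigma.mp hx).2
  have hgibbs := sum_mul_log_le_sum_mul_log_self hρ hρ1 (fun x hx => (hsample x hx).1)
    (sum_sigma_injTuples_sampleProb_le_one hint heV hwV hV)
  have hentropy :
      ∑ x ∈ S, q x.1 / D * log (q x.1 / D) = ∑ e ∈ E, q e * log (q e) - log D := by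
    refine (sum_sigma_injTuples_fst hE fun e => q e / D * log (q e / D)).trans ?_
    change D * _ = _
    rw [mul_sum, ← mul_one (log D), ← hq1, mul_sum, ← sum_sub_distrib]
    refine sum_congr rfl fun e he => ?_
    rw [log_div (hq e he).ne' hD.ne']
    field_simp
  have hexpand : ∑ x ∈ S, q x.1 / D * log (sampleProb w x.2)
      = ∑ t, (∑ x ∈ S, q x.1 / D * log (w (x.2 t))
        - ∑ x ∈ S, q x.1 / D * log (1 - ∑ t' ∈ Iio t, w (x.2 t'))) := by
    rw [sum_congr rfl fun x hx => by rw [(hsample x hx).2, mul_sum], sum_comm]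
    simp only [mul_sub, sum_sub_distrib]
  have hlogw : ∀ t, ∑ x ∈ S, q x.1 / D * log (w (x.2 t)) = -a := fun t => by
    rw [sum_sigma_injTuples_apply hE hsr q t fun v => log (w v), ha, neg_div,
      mul_div_cancel_left₀ a (Nat.cast_ne_zero.mpr (t.pos.trans_le hsr).ne')]
  calc -(s * a) - ∑ j ∈ range s, log (1 - j * exp (-a))
      = ∑ t : Fin s, (-a - log (1 - t * exp (-a))) := by
        rw [sum_sub_distrib, Fin.sum_univ_eq_sum_range (fun j => log (1 - j * exp (-a)))]
        simp
    _ ≤ ∑ x ∈ S, q x.1 / D * log (sampleProb w x.2) := by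
        rw [hexpand]
        refine sum_le_sum fun t _ => ?_
        rw [hlogw]
        linarith [sum_mul_log_one_sub_sum_Iio_le hsr hE hq hq1 hw he1 ha t]
    _ ≤ ∑ e ∈ E, q e * log (q e) - log D := hentropy ▸ hgibbs

lemma log_sum_prod_le_neg_mul_log {V : Finset ℕ} {k : ℕ} (hr : 0 < r) (hrks : k + s = r)
    (hek : (r : ℝ) ≤ exp 1 * k) (hE : ∀ e ∈ E, #e = r)
    (hint : (E : Set (Finset ℕ)).Pairwise fun e e' => #(e ∩ e') < s) (heV : ∀ e ∈ E, e ⊆ V)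
    (hwV : ∀ v ∈ V, 0 ≤ w v) (hV : ∑ v ∈ V, w v ≤ 1) (hw : ∀ e ∈ E, ∀ v ∈ e, 0 < w v)
    (hEne : E.Nonempty) :
    log (∑ e ∈ E, ∏ v ∈ e, w v) ≤ -(r * log r) := by
  set f := ∑ e ∈ E, ∏ v ∈ e, w v
  have hf : 0 < f := sum_pos (fun e he => prod_pos (hw e he)) hEne
  set q := fun e => (∏ v ∈ e, w v) / f
  have hq : ∀ e ∈ E, 0 < q e := fun e he => div_pos (prod_pos (hw e he)) hf
  have hq1 : ∑ e ∈ E, q e = 1 := by rw [← sum_div, div_self hf.ne']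
  set a := -(∑ e ∈ E, q e * ∑ v ∈ e, log (w v)) / r
  have ha : ∑ e ∈ E, q e * ∑ v ∈ e, log (w v) = -(r * a) := by
    simp only [a]; field_simp
  have hsr : s ≤ r := hrks ▸ Nat.le_add_left s k
  have hentropy := tuple_entropy_le hsr hE hint heV hwV hV hw hq hq1 ha
  have hqlogq : ∑ e ∈ E, q e * log (q e) = -(r * a) - log f := by
    rw [← ha, ← mul_one (log f), ← hq1, mul_sum, ← sum_sub_distrib]
    refine sum_congr rfl fun e he => ?_
    rw [log_div (prod_pos (hw e he)).ne' hf.ne', log_prod fun v hv => (hw e he v hv).ne']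
    ring
  have hlogr := log_le_of_sum_mul_sum_log_eq hr hE (fun e he => (hq e he).le) hq1 hw
    (fun e he => (sum_le_sum_of_subset_of_nonneg (heV e he) fun v hv _ => hwV v hv).trans hV) ha
  have hsampling := neg_mul_add_sum_log_one_sub_le (by exact_mod_cast hrks.symm) hek hlogr
  rw [← log_descFactorial hsr] at hsampling
  have hra : (r : ℝ) * a = k * a + s * a := by rw [← add_mul, ← Nat.cast_add, hrks]
  linarith

end EdgeDistribution

lemma sum_prod_le_inv_pow_of_pairwise_card_inter_lt {k s r : ℕ} (hr : 0 < r) (hrks : k + s = r)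
    (hek : (r : ℝ) ≤ exp 1 * k) (H : Hypergraph') (hH : H.IsUniform r)
    (hint : (H.edges : Set (Finset ℕ)).Pairwise fun e e' => #(e ∩ e') < s)
    {w : ℕ → ℝ} (hw : ∀ v, 0 ≤ w v) (hw1 : ∑ v ∈ H.verts, w v = 1) :
    ∑ e ∈ H.edges, ∏ v ∈ e, w v ≤ ((r : ℝ) ^ r)⁻¹ := by
  set E := H.edges.filter fun e => ∀ v ∈ e, 0 < w v
  have hEH : ∀ e ∈ E, e ∈ H.edges := fun e he => (mem_filter.mp he).1
  have hsplit : ∑ e ∈ E, ∏ v ∈ e, w v = ∑ e ∈ H.edges, ∏ v ∈ e, w v :=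
    sum_filter_of_ne fun e _ hp v hv => (hw v).lt_of_ne (prod_ne_zero_iff.mp hp v hv).symm
  rw [← hsplit]
  rcases E.eq_empty_or_nonempty with hE | hE
  · rw [hE, sum_empty]; positivity
  have hlog := log_sum_prod_le_neg_mul_log hr hrks hek (fun e he => hH e (hEH e he))
    (hint.mono fun e he => hEH e he) (fun e he => H.edge_sub e (hEH e he)) (fun v _ => hw v)
    hw1.le (fun e he => (mem_filter.mp he).2) hE
  rw [← log_pow, ← log_inv] at hlog
  exact (log_le_log_iff (sum_pos (fun e he => prod_pos (mem_filter.mp he).2) hE)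
    (by positivity)).mp hlog

lemma Nat.ceil_div_exp_one_lt {r : ℕ} (hr : 2 ≤ r) : ⌈(r : ℝ) / exp 1⌉₊ < r := by
  have hexp : 2 ≤ exp 1 := by linarith [add_one_le_exp 1]
  have : (r : ℝ) / exp 1 ≤ (r - 1 : ℕ) := by
    rw [Nat.cast_sub (by omega), Nat.cast_one, div_le_iff₀ (by positivity)]
    have : (2 : ℝ) ≤ r := by exact_mod_cast hr
    nlinarith
  have := Nat.ceil_le.mpr this
  omega

/-- **Corollary 6.3.** For every `r ≥ 4`, with `k = ⌈r/e⌉`, if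
`Lset ⊆ {0, 1, …, r−k−1}` and `H` is an `Lset`-intersecting `r`-uniform hypergraph,
then `b(H) ≤ r!/r^r`. -/
theorem LIntersecting_blowupDensity_le (r : ℕ) (hr : 4 ≤ r) (k : ℕ)
    (hk : k = ⌈(r : ℝ) / Real.exp 1⌉₊)
    (Lset : Set ℕ) (hL : ∀ l ∈ Lset, l ≤ r - k - 1)
    (H : Hypergraph') (hH : H.IsUniform r) (hHL : LIntersecting Lset H) :
    blowupDensity r H ≤ (r.factorial : ℝ) / (r : ℝ) ^ r := by
  have hkr : k < r := hk ▸ Nat.ceil_div_exp_one_lt (by omega)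
  have hek : (r : ℝ) ≤ exp 1 * k := by
    rw [← div_le_iff₀' (exp_pos 1), hk]
    exact Nat.le_ceil _
  have hint : (H.edges : Set (Finset ℕ)).Pairwise fun e e' => #(e ∩ e') < r - k :=
    fun e he e' he' hne => by have := hL _ (hHL e he e' he' hne); omega
  have hlagrangian : lagrangian H ≤ ((r : ℝ) ^ r)⁻¹ := by
    refine Real.sSup_le ?_ (by positivity)
    rintro _ ⟨w, hw, hw1, rfl⟩
    exact sum_prod_le_inv_pow_of_pairwise_card_inter_lt (by omega)
      (Nat.add_sub_cancel' hkr.le) hek H hH hint hw hw1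
  rw [blowupDensity, div_eq_mul_inv]
  gcongr
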